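/- arXiv:2112.09257 — 2 statements merged into one kernel-verified Lean document; each statement's English description precedes it below -/
import Mathlib

section
/- Let T, T' be bounded complexes of finitely generated projective A-modules such that Hom_{K^b(proj-A)}(T, T'[i]) = 0 for all i ≠ 0. Then dim_k Hom_{K^b(proj-A)}(T, T') = Σ_{i,j∈ℤ} (-1)^{i-j} dim_k Hom_A(T_i, T'_j). -/
/-!
A morphism `T ⟶ T'` in the homotopy category is a degree-`0` cohomology class of the Hom complex
`Hom^n(T, T') = ∏_p Hom_A(T_p, T'_{p+n})`, and `Hom(T, T'[n]) = 0` for `n ≠ 0` says that this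
bounded complex of finite-dimensional `k`-spaces is exact outside degree `0`. Hence
`dim_k Hom(T, T')` is its Euler characteristic `∑_n (-1)^n ∑_p dim_k Hom_A(T_p, T'_{p+n})`,
which becomes the claimed double sum after substituting `j = p + n`.
-/

open CategoryTheory Limits Module CochainComplex HomComplex

theorem finsum_sub_sub_one_eq_zero {G : Type*} [AddCommGroup G] {u : ℤ → G}
    (hu : (Function.support u).Finite) : ∑ᶠ n, (u n - u (n - 1)) = 0 := by
  have hshift : ∑ᶠ n, u (n - 1) = ∑ᶠ n, u n := finsum_comp_equiv (Equiv.subRight 1)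
  have hu' : (Function.support fun n => u (n - 1)).Finite :=
    hu.preimage (Equiv.subRight (1 : ℤ)).injective.injOn
  rw [finsum_sub_distrib hu hu', hshift, sub_self]

theorem finsum_finsum_comp_add {α M : Type*} [AddGroup α] [AddCommMonoid M] (F : α → α → M)
    (hF : (Function.support (Function.uncurry F)).Finite) :
    ∑ᶠ (n) (p), F p (p + n) = ∑ᶠ (i) (j), F i j := by
  let e : α × α ≃ α × α :=
    (Equiv.prodComm α α).trans (Equiv.prodShear (.refl α) Equiv.addLeft)
  have he : (Function.support fun x : α × α => F x.2 (x.2 + x.1)).Finite :=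
    hF.preimage e.injective.injOn
  rw [← finsum_curry _ he]
  exact (finsum_comp_equiv e).trans (finsum_curry _ hF)

def LinearEquiv.piEquivPiSubtypeProd (R : Type*) [Semiring R] {ι : Type*} (p : ι → Prop)
    [DecidablePred p] (M : ι → Type*) [∀ i, AddCommMonoid (M i)] [∀ i, Module R (M i)] :
    (∀ i, M i) ≃ₗ[R] (∀ i : {i // p i}, M i) × (∀ i : {i // ¬p i}, M i) :=
  { Equiv.piEquivPiSubtypeProd p M with
    map_add' := fun _ _ => rfl
    map_smul' := fun _ _ => rfl }

section FiniteDimensional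

variable {k : Type*} [Field k]

section Pi

variable {ι : Type*} {M : ι → Type*} [∀ i, AddCommGroup (M i)] [∀ i, Module k (M i)]
  [∀ i, FiniteDimensional k (M i)]

theorem Module.finite_pi_of_finite_support
    (h : (Function.support fun i => finrank k (M i)).Finite) :
    Module.Finite k (∀ i, M i) := by
  classical
  have : ∀ i : {i // i ∉ h.toFinset}, Subsingleton (M i) := fun i =>
    finrank_zero_iff.mp (by simpa using i.2)
  exact .equiv (LinearEquiv.piEquivPiSubtypeProd k (· ∈ h.toFinset) M).symm

theorem Module.finrank_pi_eq_finsum (h : (Function.support fun i => finrank k (M i)).Finite) :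
    finrank k (∀ i, M i) = ∑ᶠ i, finrank k (M i) := by
  classical
  have : ∀ i : {i // i ∉ h.toFinset}, Subsingleton (M i) := fun i =>
    finrank_zero_iff.mp (by simpa using i.2)
  rw [(LinearEquiv.piEquivPiSubtypeProd k (· ∈ h.toFinset) M).finrank_eq, finrank_prod,
    finrank_zero_of_subsingleton (M := ∀ i : {i // i ∉ h.toFinset}, M i), add_zero,
    finrank_pi_fintype, Finset.sum_coe_sort h.toFinset (fun i => finrank k (M i)),
    finsum_eq_sum_of_support_subset _ h.coe_toFinset.superset]

end Pi

theorem finrank_eq_finrank_range_sub_finrank_map_ker {M N P : Type*} [AddCommGroup M]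
    [Module k M] [AddCommGroup N] [Module k N] [AddCommGroup P] [Module k P]
    [FiniteDimensional k N] {Φ : M →ₗ[k] N} (hΦ : Function.Injective Φ) {ψ : M →ₗ[k] P}
    (hψ : Function.Surjective ψ) :
    (finrank k P : ℤ) =
      finrank k (LinearMap.range Φ) - finrank k ((LinearMap.ker ψ).map Φ) := by
  have : FiniteDimensional k M := .of_injective Φ hΦ
  have hrank := LinearMap.finrank_range_add_finrank_ker ψ
  rw [LinearMap.range_eq_top.mpr hψ, finrank_top] at hrank
  rw [LinearMap.finrank_range_of_inj hΦ, (Submodule.equivMapOfInjective Φ hΦ _).finrank_eq.symm]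
  omega

theorem finrank_ker_sub_finrank_range_eq_finsum {C : ℤ → Type*} [∀ n, AddCommGroup (C n)]
    [∀ n, Module k (C n)] [∀ n, FiniteDimensional k (C n)] (d : ∀ n m, C n →ₗ[k] C m)
    (hC : (Function.support fun n => finrank k (C n)).Finite)
    (hexact : ∀ n ≠ 0, LinearMap.ker (d n (n + 1)) = LinearMap.range (d (n - 1) n)) :
    (finrank k (LinearMap.ker (d 0 1)) : ℤ) - finrank k (LinearMap.range (d (-1) 0)) =
      ∑ᶠ n, (n.negOnePow : ℤ) * finrank k (C n) := by
  set r : ℤ → ℤ := fun n => finrank k (LinearMap.range (d n (n + 1)))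
  set ρ : ℤ → ℤ := fun n => finrank k (LinearMap.range (d (n - 1) n))
  set κ : ℤ → ℤ := fun n => finrank k (LinearMap.ker (d n (n + 1)))
  set u : ℤ → ℤ := fun n => (n.negOnePow : ℤ) * r n
  have hrρ (n : ℤ) : r (n - 1) = ρ n := by simp only [r, ρ]; rw [sub_add_cancel]
  have hu : (Function.support u).Finite := by
    refine hC.subset fun n hn h0 => hn ?_
    have : finrank k (LinearMap.range (d n (n + 1))) = 0 :=
      Nat.eq_zero_of_le_zero (h0 ▸ LinearMap.finrank_range_le _)
    simp [u, r, this]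
  have hdefect (n : ℤ) (hn : n ≠ 0) : κ n - ρ n = 0 := by
    simp only [κ, ρ]; rw [hexact n hn, sub_self]
  -- rank–nullity splits each term into a telescoping part and a defect supported in degree `0`
  have hsplit (n : ℤ) : (n.negOnePow : ℤ) * finrank k (C n) =
      (u n - u (n - 1)) + (n.negOnePow : ℤ) * (κ n - ρ n) := by
    have hdim : (finrank k (C n) : ℤ) = r n + κ n := by
      simp only [r, κ]
      exact_mod_cast (LinearMap.finrank_range_add_finrank_ker (d n (n + 1))).symm
    simp only [u, hdim, ← hrρ, Int.negOnePow_sub, Int.negOnePow_one]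
    push_cast
    ring
  have hsupp : (Function.support fun n => (n.negOnePow : ℤ) * (κ n - ρ n)).Finite :=
    (Set.finite_singleton 0).subset fun n hn => by_contra fun h0 => hn (by simp [hdefect n h0])
  rw [finsum_congr hsplit, finsum_add_distrib _ hsupp, finsum_sub_sub_one_eq_zero hu, zero_add,
    finsum_eq_single _ 0 fun n hn => by simp [hdefect n hn]]
  · simp [κ, ρ]
  · exact (hu.union (hu.preimage (Equiv.subRight (1 : ℤ)).injective.injOn)).subset
      (Function.support_sub _ _)

open scoped ModuleCat in
theorem ModuleCat.finiteDimensional_hom {R : Type*} [Ring R] [Algebra k R] [Module.Finite k R]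
    (X Y : ModuleCat R) [Module.Finite R X] [Module.Finite R Y] :
    FiniteDimensional k (X ⟶ Y) := by
  have : Module.Finite k X := .trans R X
  have : Module.Finite k Y := .trans R Y
  exact .of_injective (LinearMap.restrictScalarsₗ k R X Y k ∘ₗ homLinearEquiv.toLinearMap)
    ((LinearMap.restrictScalars_injective k).comp homLinearEquiv.injective)

theorem finite_support_finrank_hom_of_bounded {C : Type*} [Category C] [Preadditive C]
    [Linear k C] {X Y : ℤ → C}
    (hX : ∃ a b : ℤ, ∀ i : ℤ, (i < a ∨ b < i) → IsZero (X i))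
    (hY : ∃ a b : ℤ, ∀ i : ℤ, (i < a ∨ b < i) → IsZero (Y i)) :
    (Function.support (Function.uncurry fun p q => finrank k (X p ⟶ Y q))).Finite := by
  obtain ⟨a, b, hX⟩ := hX
  obtain ⟨a', b', hY⟩ := hY
  refine ((Set.finite_Icc a b).prod (Set.finite_Icc a' b')).subset fun ⟨p, q⟩ h => ?_
  simp only [Set.mem_prod, Set.mem_Icc]
  refine ⟨by_contra fun hp => h ?_, by_contra fun hq => h ?_⟩
  · have : Subsingleton (X p ⟶ Y q) := ⟨(hX p (by omega)).eq_of_src⟩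
    exact finrank_zero_of_subsingleton
  · have : Subsingleton (X p ⟶ Y q) := ⟨(hY q (by omega)).eq_of_tgt⟩
    exact finrank_zero_of_subsingleton

end FiniteDimensional

namespace CochainComplex.HomComplex

def Triplet.equivInt (n : ℤ) : ℤ ≃ Triplet n where
  toFun p := ⟨p, p + n, rfl⟩
  invFun t := t.p
  left_inv _ := rfl
  right_inv := by rintro ⟨p, q, rfl⟩; rfl

variable {k : Type*} [Field k] {C : Type*} [Category C] [Preadditive C] [Linear k C]
  (K L : CochainComplex C ℤ)

def Cochain.linearEquivPi (n : ℤ) : Cochain K L n ≃ₗ[k] ∀ p, K.X p ⟶ L.X (p + n) :=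
  (LinearEquiv.piCongrLeft k (fun t : Triplet n => K.X t.p ⟶ L.X t.q) (Triplet.equivInt n)).symm

def Cochain.ofHomLinearMap : (K ⟶ L) →ₗ[k] Cochain K L 0 where
  toFun := Cochain.ofHom
  map_add' := Cochain.ofHom_add
  map_smul' _ _ := Cochain.ext₀ _ _ fun _ => by simp

variable {K L}

theorem Cochain.range_ofHomLinearMap_eq_ker_δ_hom :
    LinearMap.range (Cochain.ofHomLinearMap (k := k) K L) = LinearMap.ker (δ_hom k K L 0 1) := by
  refine le_antisymm ?_ fun z hz => ?_
  · rintro _ ⟨φ, rfl⟩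
    exact δ_ofHom φ
  · exact ⟨Cocycle.homOf (Cocycle.mk z 1 (zero_add 1) (LinearMap.mem_ker.mp hz)),
      Cocycle.cochain_ofHom_homOf_eq_coe _⟩

theorem Cochain.map_ofHomLinearMap_ker_eq_range_δ_hom :
    (LinearMap.ker ((HomotopyCategory.quotient C (ComplexShape.up ℤ)).mapLinearMap k)).map
      (Cochain.ofHomLinearMap K L) = LinearMap.range (δ_hom k K L (-1) 0) := by
  refine le_antisymm ?_ ?_
  · rintro _ ⟨φ, hφ, rfl⟩
    obtain ⟨h⟩ := (HomotopyCategory.quotient_map_eq_zero_iff φ).mp hφ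
    obtain ⟨w, hw⟩ := Cochain.equivHomotopy _ _ h
    refine ⟨w, ?_⟩
    change δ (-1) 0 w = Cochain.ofHom φ
    rw [hw, Cochain.ofHom_zero, add_zero]
  · rintro _ ⟨w, rfl⟩
    exact ⟨_, (HomotopyCategory.quotient_map_eq_zero_iff _).mpr ⟨Homotopy.nullHomotopy' _⟩,
      (δ_neg_one_cochain w).symm⟩

theorem finrank_homotopyCategory_hom_eq [FiniteDimensional k (Cochain K L 0)] :
    (finrank k ((HomotopyCategory.quotient C (ComplexShape.up ℤ)).obj K ⟶
        (HomotopyCategory.quotient C (ComplexShape.up ℤ)).obj L) : ℤ) =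
      finrank k (LinearMap.ker (δ_hom k K L 0 1)) -
        finrank k (LinearMap.range (δ_hom k K L (-1) 0)) := by
  rw [finrank_eq_finrank_range_sub_finrank_map_ker (Φ := Cochain.ofHomLinearMap K L)
    (fun _ _ => Cochain.ofHom_injective)
    (ψ := (HomotopyCategory.quotient C _).mapLinearMap k) (Functor.map_surjective _),
    Cochain.range_ofHomLinearMap_eq_ker_δ_hom, Cochain.map_ofHomLinearMap_ker_eq_range_δ_hom]

theorem ker_δ_hom_eq_range_of_shift_eq_zero
    (hvan : ∀ n : ℤ, n ≠ 0 →
      ∀ f : (HomotopyCategory.quotient C (ComplexShape.up ℤ)).obj K ⟶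
        ((HomotopyCategory.quotient C (ComplexShape.up ℤ)).obj L)⟦n⟧, f = 0)
    {n : ℤ} (hn : n ≠ 0) :
    LinearMap.ker (δ_hom k K L n (n + 1)) = LinearMap.range (δ_hom k K L (n - 1) n) := by
  refine le_antisymm (fun z hz => ?_) (LinearMap.range_le_ker_iff.mpr ?_)
  · have hzero : CohomologyClass.toHom
        (CohomologyClass.mk (Cocycle.mk z (n + 1) rfl (LinearMap.mem_ker.mp hz))) = 0 :=
      (cancel_mono (((HomotopyCategory.quotient C _).commShiftIso n).hom.app L)).mp
        ((hvan n hn _).trans zero_comp.symm)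
    obtain ⟨w, hw⟩ := (mem_coboundaries_iff _ (n - 1) (by omega)).mp
      ((CohomologyClass.toHom_mk_eq_zero_iff _).mp hzero)
    exact ⟨w, hw⟩
  · exact LinearMap.ext fun w => δ_δ _ _ _ w

theorem Cochain.finite_support_finrank_comp_add
    (hKL : (Function.support (Function.uncurry fun p q => finrank k (K.X p ⟶ L.X q))).Finite)
    (n : ℤ) :
    (Function.support fun p => finrank k (K.X p ⟶ L.X (p + n))).Finite :=
  hKL.preimage (f := fun p => (p, p + n)) fun _ _ _ _ h => congrArg Prod.fst h

variable [∀ p q, FiniteDimensional k (K.X p ⟶ L.X q)]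

theorem Cochain.finiteDimensional
    (hKL : (Function.support (Function.uncurry fun p q => finrank k (K.X p ⟶ L.X q))).Finite)
    (n : ℤ) : FiniteDimensional k (Cochain K L n) :=
  have := Module.finite_pi_of_finite_support (Cochain.finite_support_finrank_comp_add hKL n)
  .equiv (Cochain.linearEquivPi K L n).symm

theorem Cochain.finrank_eq_finsum
    (hKL : (Function.support (Function.uncurry fun p q => finrank k (K.X p ⟶ L.X q))).Finite)
    (n : ℤ) :
    finrank k (Cochain K L n) = ∑ᶠ p, finrank k (K.X p ⟶ L.X (p + n)) := by
  rw [(Cochain.linearEquivPi K L n).finrank_eq,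
    Module.finrank_pi_eq_finsum (Cochain.finite_support_finrank_comp_add hKL n)]

theorem Cochain.finite_support_finrank
    (hKL : (Function.support (Function.uncurry fun p q => finrank k (K.X p ⟶ L.X q))).Finite) :
    (Function.support fun n => finrank k (Cochain K L n)).Finite := by
  refine (hKL.image fun x => x.2 - x.1).subset fun n hn => by_contra fun hn' => hn ?_
  change finrank k (Cochain K L n) = 0
  rw [Cochain.finrank_eq_finsum hKL]
  exact finsum_eq_zero_of_forall_eq_zero fun p =>
    by_contra fun hp => hn' ⟨(p, p + n), hp, add_sub_cancel_left p n⟩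

theorem Cochain.finsum_negOnePow_mul_finrank
    (hKL : (Function.support (Function.uncurry fun p q => finrank k (K.X p ⟶ L.X q))).Finite) :
    ∑ᶠ n, (n.negOnePow : ℤ) * finrank k (Cochain K L n) =
      ∑ᶠ (i) (j), ((i - j).negOnePow : ℤ) * finrank k (K.X i ⟶ L.X j) := by
  rw [← finsum_finsum_comp_add _ (hKL.subset fun x hx h0 => hx (by
    simp only [Function.uncurry_def] at h0 ⊢
    rw [h0, Nat.cast_zero, mul_zero]))]
  refine finsum_congr fun n => ?_
  have hcast : ((∑ᶠ p, finrank k (K.X p ⟶ L.X (p + n)) : ℕ) : ℤ) =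
      ∑ᶠ p, (finrank k (K.X p ⟶ L.X (p + n)) : ℤ) :=
    (Nat.castAddMonoidHom ℤ).map_finsum (Cochain.finite_support_finrank_comp_add hKL n)
  rw [Cochain.finrank_eq_finsum hKL, hcast, mul_finsum]
  refine finsum_congr fun p => ?_
  rw [show p - (p + n) = -n by ring, Int.negOnePow_neg]

end CochainComplex.HomComplex

/-- **Happel's formula.** Let `T, T'` be bounded complexes of finitely
generated projective right `A`-modules such that `Hom_{K^b(proj-A)}(T, T'[i]) = 0`
for all `i ≠ 0`.  Then
`dim_k Hom_{K^b(proj-A)}(T, T') = Σ_{i,j ∈ ℤ} (-1)^{i-j} dim_k Hom_A(T_i, T'_j)`. -/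
theorem stmt_2 (k : Type*) [Field k] (A : Type*) [Ring A] [Algebra k A]
    [FiniteDimensional k A]
    (T T' : CochainComplex (ModuleCat Aᵐᵒᵖ) ℤ)
    -- `T` and `T'` are bounded
    (hTb : ∃ a b : ℤ, ∀ i : ℤ, (i < a ∨ b < i) → IsZero (T.X i))
    (hT'b : ∃ a b : ℤ, ∀ i : ℤ, (i < a ∨ b < i) → IsZero (T'.X i))
    -- with finitely generated projective components
    (hTp : ∀ i : ℤ, Projective (T.X i) ∧ Module.Finite Aᵐᵒᵖ (T.X i))
    (hT'p : ∀ i : ℤ, Projective (T'.X i) ∧ Module.Finite Aᵐᵒᵖ (T'.X i))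
    -- `Hom_{K^b(proj-A)}(T, T'[i]) = 0` for `i ≠ 0`
    (hvan : ∀ i : ℤ, i ≠ 0 →
      ∀ f : (HomotopyCategory.quotient (ModuleCat Aᵐᵒᵖ) (ComplexShape.up ℤ)).obj T ⟶
        ((HomotopyCategory.quotient (ModuleCat Aᵐᵒᵖ) (ComplexShape.up ℤ)).obj T')⟦i⟧,
        f = 0) :
    (Module.finrank k
        ((HomotopyCategory.quotient (ModuleCat Aᵐᵒᵖ) (ComplexShape.up ℤ)).obj T ⟶
          (HomotopyCategory.quotient (ModuleCat Aᵐᵒᵖ) (ComplexShape.up ℤ)).obj T') : ℤ) =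
      ∑ᶠ (i : ℤ) (j : ℤ),
        ((i - j).negOnePow : ℤ) * Module.finrank k (T.X i ⟶ T'.X j) := by
  have : ∀ i j, FiniteDimensional k (T.X i ⟶ T'.X j) := fun i j =>
    have := (hTp i).2
    have := (hT'p j).2
    ModuleCat.finiteDimensional_hom _ _
  have hsupp := finite_support_finrank_hom_of_bounded (k := k) hTb hT'b
  have := Cochain.finiteDimensional hsupp
  rw [finrank_homotopyCategory_hom_eq,
    finrank_ker_sub_finrank_range_eq_finsum (δ_hom k T T') (Cochain.finite_support_finrank hsupp)
      fun n hn => ker_δ_hom_eq_range_of_shift_eq_zero hvan hn,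
    Cochain.finsum_negOnePow_mul_finrank hsupp]
end

section
/- Every automorphism of Λ_m preserving the linear span S of the primitive idempotents e_1,...,e_m either fixes all the idempotents or interchanges e_1 and e_2 while fixing e_3,...,e_m. -/
/-- Generators of the algebra `Λ_m`: the vertex idempotents `e_i` (`i = 1,…,m`,
here `0`-indexed), the arrows `α₁ : 3 → 1`, `α₂ : 3 → 2`, `δ₁ : 1 → m`,
`δ₂ : 2 → m` and the arrows `β_i : i → i-1` for `4 ≤ i ≤ m` (here the
generators `β j` with `j.val < 3` are junk and are killed by a relation). -/
inductive LamGen (m : ℕ) where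
  | e : Fin m → LamGen m
  | α : Fin 2 → LamGen m
  | δ : Fin 2 → LamGen m
  | β : Fin m → LamGen m

namespace LamGen

/-- The generator is an arrow (not a vertex idempotent). -/
def IsArrow {m : ℕ} : LamGen m → Prop
  | e _ => False
  | _ => True

variable (k : Type*) [Field k] (m : ℕ) (hm : 4 ≤ m)

open FreeAlgebra

/-- The defining relations of `Λ_m`, as a relation on the free algebra on the
generators: the path-algebra relations for the quiver `Q_m` (orthogonal idempotents
summing to `1`, source/target relations for the arrows), the commutativity relation
`α₁δ₁ = α₂δ₂` and the vanishing of all paths of length `m`.  Multiplication is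
written in path order (`αβ` means “first `α`, then `β`”). -/
inductive Rel : FreeAlgebra k (LamGen m) → FreeAlgebra k (LamGen m) → Prop
  | idem (i j : Fin m) :
      Rel (ι k (e i) * ι k (e j)) (if i = j then ι k (e i) else 0)
  | sum_one : Rel (∑ i : Fin m, ι k (e i)) 1
  | alpha_src (i : Fin 2) :
      Rel (ι k (e ⟨2, by omega⟩) * ι k (α i)) (ι k (α i))
  | alpha_tgt (i : Fin 2) :
      Rel (ι k (α i) * ι k (e ⟨i.val, by omega⟩)) (ι k (α i))
  | delta_src (i : Fin 2) :
      Rel (ι k (e ⟨i.val, by omega⟩) * ι k (δ i)) (ι k (δ i))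
  | delta_tgt (i : Fin 2) :
      Rel (ι k (δ i) * ι k (e ⟨m - 1, by omega⟩)) (ι k (δ i))
  | beta_junk (j : Fin m) (h : j.val < 3) : Rel (ι k (β j)) 0
  | beta_src (j : Fin m) (h : 3 ≤ j.val) :
      Rel (ι k (e j) * ι k (β j)) (ι k (β j))
  | beta_tgt (j : Fin m) (h : 3 ≤ j.val) :
      Rel (ι k (β j) * ι k (e ⟨j.val - 1, by omega⟩)) (ι k (β j))
  | comm : Rel (ι k (α 0) * ι k (δ 0)) (ι k (α 1) * ι k (δ 1))
  | long (w : Fin m → LamGen m) (hw : ∀ n, IsArrow (w n)) :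
      Rel ((List.ofFn fun n : Fin m => ι k (w n)).prod) 0

end LamGen

/-- The symmetric representation-finite algebra `Λ_m` of type `D_m`
(the Double Edge algebra of the star with `m-2` regular edges and a double edge). -/
abbrev Lam (k : Type*) [Field k] (m : ℕ) (hm : 4 ≤ m) :=
  RingQuot (LamGen.Rel k m hm)

namespace LamGen

variable (k : Type*) [Field k] (m : ℕ) (hm : 4 ≤ m)

/-- The canonical projection onto `Λ_m`. -/
noncomputable def π : FreeAlgebra k (LamGen m) →ₐ[k] Lam k m hm :=
  RingQuot.mkAlgHom k (Rel k m hm)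

/-- The vertex idempotents `e_i ∈ Λ_m`. -/
noncomputable def eL (i : Fin m) : Lam k m hm := π k m hm (FreeAlgebra.ι k (e i))

/-- The arrows `α_i ∈ Λ_m`. -/
noncomputable def αL (i : Fin 2) : Lam k m hm := π k m hm (FreeAlgebra.ι k (α i))

/-- The arrows `δ_i ∈ Λ_m`. -/
noncomputable def δL (i : Fin 2) : Lam k m hm := π k m hm (FreeAlgebra.ι k (δ i))

/-- The arrows `β_j ∈ Λ_m`. -/
noncomputable def βL (j : Fin m) : Lam k m hm := π k m hm (FreeAlgebra.ι k (β j))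

end LamGen

open LamGen

/-!
An automorphism `f` of `Λ_m` sends the complete family of orthogonal idempotents `e_i` to
another such family; when the images lie in the span `S` of the (linearly independent) `e_i`,
their coefficients form a permutation matrix, so `f e_i = e_{σ i}` for a permutation `σ`.
The permutation must preserve the invariant `e_i Λ e_j Λ e_l = 0`. Since `Λ_m` is spanned by
paths, and a path survives in `Λ_m` exactly when its length is `< m` (the relations kill paths
of length `m`; a representation by level-raising shifts shows shorter ones are nonzero), this
invariant says that shortest paths `i → j → l` in `Q_m` have total length `≥ m`. On the
oriented cycle underlying `Q_m` this forces `σ` to fix `{1, 2}` setwise and to be monotone,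
hence the identity, on the remaining vertices.
-/

theorem Finite.exists_perm_of_existsUnique {ι : Type*} [Finite ι] (R : ι → ι → Prop)
    (hcol : ∀ j, ∃! i, R i j) (hrow : ∀ i, ∃ j, R i j) :
    ∃ σ : Equiv.Perm ι, ∀ i j, R i j ↔ j = σ i := by
  choose τ hτ hτ_unique using hcol
  have hτ_surj : Function.Surjective τ := fun i =>
    let ⟨j, hj⟩ := hrow i; ⟨j, (hτ_unique j i hj).symm⟩
  let E := Equiv.ofBijective τ (Finite.surjective_iff_bijective.mp hτ_surj)
  refine ⟨E.symm, fun i j => ⟨fun h => ?_, fun h => ?_⟩⟩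
  · rw [Equiv.eq_symm_apply]; exact (hτ_unique j i h).symm
  · rw [Equiv.eq_symm_apply] at h; exact h ▸ hτ j

theorem OrthogonalIdempotents.sum_smul_mul_sum_smul {k A ι : Type*} [CommSemiring k]
    [Semiring A] [Algebra k A] [Fintype ι] [DecidableEq ι] {e : ι → A}
    (he : OrthogonalIdempotents e) (c d : ι → k) :
    (∑ j, c j • e j) * (∑ j, d j • e j) = ∑ j, (c j * d j) • e j := by
  simp [Finset.sum_mul, Finset.mul_sum, he.mul_eq, smul_smul, mul_comm]

theorem CompleteOrthogonalIdempotents.exists_perm_of_mem_span {k A ι : Type*} [CommRing k]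
    [IsDomain k] [Ring A] [Algebra k A] [Fintype ι] {e x : ι → A}
    (he : CompleteOrthogonalIdempotents e) (hli : LinearIndependent k e)
    (hx : CompleteOrthogonalIdempotents x) (hx0 : ∀ i, x i ≠ 0)
    (hxe : ∀ i, x i ∈ Submodule.span k (Set.range e)) :
    ∃ σ : Equiv.Perm ι, ∀ i, x i = e (σ i) := by
  classical
  choose a ha using fun i => (Submodule.mem_span_range_iff_exists_fun k).mp (hxe i)
  have hcoeff {c d : ι → k} (h : ∑ j, c j • e j = ∑ j, d j • e j) : c = d :=
    funext (Fintype.linearIndependent_iffₛ.mp hli c d h)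
  have hmul (i i' : ι) : (fun j => a i j * a i' j) = if i = i' then a i else 0 := by
    refine hcoeff ?_
    rw [← he.sum_smul_mul_sum_smul, ha, ha, hx.mul_eq]
    split_ifs <;> simp [ha]
  have hsum : (fun j => ∑ i, a i j) = 1 := by
    refine hcoeff ?_
    simp only [Finset.sum_smul, Pi.one_apply, one_smul]
    rw [Finset.sum_comm, he.complete]
    simp only [ha, hx.complete]
  have hone {i j} (h : a i j ≠ 0) : a i j = 1 := by
    have := congrFun (hmul i i) j
    rw [if_pos rfl] at this
    exact (mul_eq_left₀ h).mp this
  obtain ⟨σ, hσ⟩ := Finite.exists_perm_of_existsUnique (fun i j => a i j ≠ 0)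
    (fun j => by
      obtain ⟨i, -, hi⟩ := Finset.exists_ne_zero_of_sum_ne_zero
        (s := Finset.univ) (f := (a · j)) (by simp [congrFun hsum j])
      refine ⟨i, hi, fun i' hi' => by_contra fun hne => mul_ne_zero hi' hi ?_⟩
      simpa [if_neg hne] using congrFun (hmul i' i) j)
    (fun i => by
      by_contra! h
      exact hx0 i (by simp [← ha, h]))
  refine ⟨σ, fun i => ?_⟩
  rw [← ha, Finset.sum_eq_single (σ i)]
  · rw [hone ((hσ _ _).mpr rfl), one_smul]
  · intro j _ hj
    rw [not_ne_iff.mp (mt (hσ i j).mp hj), zero_smul]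
  · simp

theorem Nat.eq_of_add_mul_eq_add_mul {p q c c' n : ℕ} (hp : p < n) (hq : q < n)
    (h : p + n * c = q + n * c') : p = q := by
  simpa [Nat.add_mul_mod_self_left, Nat.mod_eq_of_lt hp, Nat.mod_eq_of_lt hq] using
    congrArg (· % n) h

def TripleVanishes {A : Type*} [Mul A] [Zero A] (a b c : A) : Prop :=
  ∀ x y : A, a * x * b * y * c = 0

theorem TripleVanishes.map_iff {A : Type*} [NonUnitalNonAssocSemiring A] (f : A ≃+* A)
    (a b c : A) : TripleVanishes (f a) (f b) (f c) ↔ TripleVanishes a b c := by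
  refine ⟨fun h x y => f.injective ?_, fun h x y => ?_⟩
  · simpa using h (f x) (f y)
  · simpa using congrArg f (h (f.symm x) (f.symm y))

namespace LamGen

inductive Arrow (m : ℕ) (hm : 4 ≤ m) : Fin m → LamGen m → Fin m → Prop
  | alpha (t : Fin 2) : Arrow m hm ⟨2, by omega⟩ (.α t) ⟨t, by omega⟩
  | delta (t : Fin 2) : Arrow m hm ⟨t, by omega⟩ (.δ t) ⟨m - 1, by omega⟩
  | beta (j : Fin m) (h : 3 ≤ j.val) : Arrow m hm j (.β j) ⟨j - 1, by omega⟩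

inductive IsPath (m : ℕ) (hm : 4 ≤ m) : Fin m → List (LamGen m) → Fin m → Prop
  | nil (i : Fin m) : IsPath m hm i [] i
  | cons {i j l : Fin m} {g : LamGen m} {w : List (LamGen m)} :
      Arrow m hm i g j → IsPath m hm j w l → IsPath m hm i (g :: w) l

/-- `Q_m` is an oriented cycle `2 → {0, 1} → m-1 → m-2 → ⋯ → 3 → 2` of length `m - 1`
(vertices `0`-indexed) in which the vertices `0` and `1` run in parallel; this is the
position of a vertex on that cycle, `0` and `1` sharing position `1`. -/
def cyclePos (m : ℕ) (v : Fin m) : ℕ :=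
  if v.val = 2 then 0 else if v.val ≤ 1 then 1 else m + 1 - v.val

/-- The length of a shortest path from `i` to `j` in `Q_m`; the parallel vertices `0` and `1`
are at distance `m - 1` from each other. -/
def cycleDist (m : ℕ) (i j : Fin m) : ℕ :=
  if i = j then 0
  else if cyclePos m i < cyclePos m j then cyclePos m j - cyclePos m i
  else m - 1 - (cyclePos m i - cyclePos m j)

section Cycle

variable {m : ℕ}

theorem cyclePos_lt (hm : 4 ≤ m) (v : Fin m) : cyclePos m v < m - 1 := by
  have := v.isLt; unfold cyclePos; split_ifs <;> omega

theorem eq_of_cyclePos_eq {u v : Fin m} (hu : u.val ≠ 1) (hv : v.val ≠ 1)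
    (h : cyclePos m u = cyclePos m v) : u = v := by
  have := u.isLt; have := v.isLt
  unfold cyclePos at h; ext; split_ifs at h <;> omega

theorem cyclePos_add_cycleDist (hm : 4 ≤ m) (i j : Fin m) :
    ∃ c ≤ 1, cyclePos m i + cycleDist m i j = cyclePos m j + (m - 1) * c := by
  have := cyclePos_lt hm i; have := cyclePos_lt hm j
  unfold cycleDist
  split_ifs with hij
  · exact ⟨0, by simp [hij]⟩
  · exact ⟨0, by omega, by omega⟩
  · exact ⟨1, le_rfl, by omega⟩

theorem le_cycleDist_add_cycleDist_iff (hm : 4 ≤ m) {i j : Fin m} (hij : i ≠ j) :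
    m ≤ cycleDist m i j + cycleDist m j i ↔ i.val ≤ 1 ∧ j.val ≤ 1 := by
  have := i.isLt; have := j.isLt
  have := cyclePos_lt hm i; have := cyclePos_lt hm j
  simp only [cycleDist, if_neg hij, if_neg (Ne.symm hij)]
  constructor
  · intro h
    by_contra! hpos
    have : cyclePos m i ≠ cyclePos m j := by
      unfold cyclePos; have := Fin.val_ne_of_ne hij; split_ifs <;> omega
    split_ifs at h <;> omega
  · intro h
    have : cyclePos m i = cyclePos m j := by unfold cyclePos; split_ifs <;> omega
    split_ifs <;> omega

theorem cycleDist_of_two_le_of_le_one (hm : 4 ≤ m) {u v : Fin m} (hu : 2 ≤ u.val)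
    (hv : v.val ≤ 1) :
    cycleDist m u v = u.val - 1 ∧ cycleDist m v u = m - u.val := by
  have := u.isLt
  have huv : u ≠ v := fun h => by omega
  simp only [cycleDist, if_neg huv, if_neg huv.symm, cyclePos]
  split_ifs <;> omega

def PreservesLongTriples (m : ℕ) (σ : Equiv.Perm (Fin m)) : Prop :=
  ∀ i j l, m ≤ cycleDist m (σ i) (σ j) + cycleDist m (σ j) (σ l) ↔
    m ≤ cycleDist m i j + cycleDist m j l

namespace PreservesLongTriples

variable {m : ℕ} {σ : Equiv.Perm (Fin m)}

theorem val_le_one_iff (hm : 4 ≤ m) (hσ : PreservesLongTriples m σ) (u : Fin m) :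
    (σ u).val ≤ 1 ↔ u.val ≤ 1 := by
  have hlow {a b : Fin m} (ha : a.val ≤ 1) (hb : b.val ≤ 1) (hab : a ≠ b) :
      (σ a).val ≤ 1 :=
    ((le_cycleDist_add_cycleDist_iff hm (σ.injective.ne hab)).mp
      ((hσ a b a).mpr ((le_cycleDist_add_cycleDist_iff hm hab).mpr ⟨ha, hb⟩))).1
  refine ⟨fun h => ?_, fun h => hlow h (b := ⟨1 - u.val, by omega⟩) (Nat.sub_le 1 _)
    (by simp [Fin.ext_iff]; omega)⟩
  by_contra hu
  have h₀ := hlow (a := ⟨0, by omega⟩) (b := ⟨1, by omega⟩) (Nat.zero_le 1) le_rfl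
    (by simp)
  have h₁ := hlow (a := ⟨1, by omega⟩) (b := ⟨0, by omega⟩) le_rfl (Nat.zero_le 1)
    (by simp)
  have hne (v : Fin m) (hv : v.val ≤ 1) : (σ u).val ≠ (σ v).val :=
    Fin.val_ne_of_ne (σ.injective.ne fun h => by omega)
  have := hne ⟨0, by omega⟩ (Nat.zero_le 1); have := hne ⟨1, by omega⟩ le_rfl
  have := Fin.val_ne_of_ne
    (σ.injective.ne (a₁ := ⟨0, by omega⟩) (a₂ := ⟨1, by omega⟩) (by simp))
  omega

theorem le_iff_le (hm : 4 ≤ m) (hσ : PreservesLongTriples m σ) {u w : Fin m}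
    (hu : 2 ≤ u.val) (hw : 2 ≤ w.val) : σ u ≤ σ w ↔ u ≤ w := by
  have hσu : 2 ≤ (σ u).val := by have := hσ.val_le_one_iff hm u; omega
  have hσw : 2 ≤ (σ w).val := by have := hσ.val_le_one_iff hm w; omega
  have hσ₀ : (σ ⟨0, by omega⟩).val ≤ 1 := (hσ.val_le_one_iff hm _).mpr (Nat.zero_le 1)
  -- the triple `(u, 0, w)` is long exactly when `w < u`
  have key := hσ u ⟨0, by omega⟩ w
  rw [(cycleDist_of_two_le_of_le_one hm hσu hσ₀).1,
    (cycleDist_of_two_le_of_le_one hm hσw hσ₀).2,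
    (cycleDist_of_two_le_of_le_one hm hu (Nat.zero_le 1)).1,
    (cycleDist_of_two_le_of_le_one hm hw (Nat.zero_le 1)).2] at key
  have := (σ w).isLt; have := w.isLt
  rw [← not_lt, ← not_lt, not_iff_not, Fin.lt_def, Fin.lt_def]
  exact ⟨fun h => by have := key.mp (by omega); omega,
    fun h => by have := key.mpr (by omega); omega⟩

theorem apply_eq_self (hm : 4 ≤ m) (hσ : PreservesLongTriples m σ) {u : Fin m}
    (hu : 2 ≤ u.val) : σ u = u := by
  have hhigh (v : Fin m) : 2 ≤ (σ v).val ↔ 2 ≤ v.val := by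
    have := hσ.val_le_one_iff hm v; omega
  let τ : {v : Fin m // 2 ≤ v.val} ≃o {v : Fin m // 2 ≤ v.val} :=
    { σ.subtypePerm hhigh with map_rel_iff' := fun {a b} => hσ.le_iff_le hm a.2 b.2 }
  change (τ ⟨u, hu⟩).val = u
  rw [Subsingleton.elim τ (OrderIso.refl _)]
  rfl

theorem eq_one_or_swap (hm : 4 ≤ m) (hσ : PreservesLongTriples m σ) :
    σ = 1 ∨
      σ = Equiv.swap ⟨0, Nat.zero_lt_of_lt hm⟩ ⟨1, (by decide : 1 < 4).trans_le hm⟩ := by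
  set v₀ : Fin m := ⟨0, Nat.zero_lt_of_lt hm⟩
  set v₁ : Fin m := ⟨1, (by decide : 1 < 4).trans_le hm⟩
  have hcases (u : Fin m) : u = v₀ ∨ u = v₁ ∨ 2 ≤ u.val := by
    simp only [Fin.ext_iff, v₀, v₁]; omega
  have hσ₀ := (hσ.val_le_one_iff hm v₀).mpr (Nat.zero_le 1)
  have hσ₁ := (hσ.val_le_one_iff hm v₁).mpr le_rfl
  have hne : σ v₀ ≠ σ v₁ := σ.injective.ne (by simp [v₀, v₁])
  rcases hcases (σ v₀) with h₀ | h₀ | h₀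
  · have h₁ : σ v₁ = v₁ := by
      rcases hcases (σ v₁) with h₁ | h₁ | h₁
      exacts [absurd (h₀.trans h₁.symm) hne, h₁, absurd hσ₁ (by omega)]
    left
    ext u
    rcases hcases u with rfl | rfl | hu
    exacts [congrArg Fin.val h₀, congrArg Fin.val h₁,
      congrArg Fin.val (hσ.apply_eq_self hm hu)]
  · have h₁ : σ v₁ = v₀ := by
      rcases hcases (σ v₁) with h₁ | h₁ | h₁
      exacts [h₁, absurd (h₀.trans h₁.symm) hne, absurd hσ₁ (by omega)]
    right
    ext u
    rcases hcases u with rfl | rfl | hu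
    · rw [h₀, Equiv.swap_apply_left]
    · rw [h₁, Equiv.swap_apply_right]
    · rw [hσ.apply_eq_self hm hu, Equiv.swap_apply_of_ne_of_ne] <;> rintro rfl <;>
        simp [v₀, v₁] at hu
  · exact absurd hσ₀ (by omega)

end PreservesLongTriples

end Cycle

section Paths

variable {m : ℕ} {hm : 4 ≤ m}

theorem Arrow.isArrow {i j : Fin m} {g : LamGen m} (h : Arrow m hm i g j) : IsArrow g := by
  cases h <;> trivial

theorem IsPath.append {i j l : Fin m} {w w' : List (LamGen m)}
    (h : IsPath m hm i w j) (h' : IsPath m hm j w' l) : IsPath m hm i (w ++ w') l := by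
  induction h with
  | nil => exact h'
  | cons ha _ ih => exact .cons ha (ih h')

theorem IsPath.isArrow {i j : Fin m} {w : List (LamGen m)} (h : IsPath m hm i w j) :
    ∀ g ∈ w, IsArrow g := by
  induction h with
  | nil => simp
  | cons ha _ ih => simpa [ha.isArrow] using ih

theorem Arrow.cyclePos_add_one {i j : Fin m} {g : LamGen m} (h : Arrow m hm i g j) :
    ∃ c, cyclePos m i + 1 = cyclePos m j + (m - 1) * c := by
  cases h with
  | alpha t => exact ⟨0, by have := t.isLt; simp only [cyclePos]; split_ifs <;> omega⟩
  | delta t => exact ⟨0, by have := t.isLt; simp only [cyclePos]; split_ifs <;> omega⟩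
  | beta _ hi =>
      refine ⟨if i.val = 3 then 1 else 0, ?_⟩
      have := i.isLt; simp only [cyclePos]; split_ifs <;> omega

theorem IsPath.cyclePos_add_length {i j : Fin m} {w : List (LamGen m)}
    (h : IsPath m hm i w j) : ∃ c, cyclePos m i + w.length = cyclePos m j + (m - 1) * c := by
  induction h with
  | nil i => exact ⟨0, rfl⟩
  | cons ha _ ih =>
    obtain ⟨c₁, hc₁⟩ := ha.cyclePos_add_one
    obtain ⟨c₂, hc₂⟩ := ih
    exact ⟨c₁ + c₂, by rw [List.length_cons, Nat.mul_add]; omega⟩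

theorem IsPath.cycleDist_le_length {i j : Fin m} {w : List (LamGen m)}
    (h : IsPath m hm i w j) : cycleDist m i j ≤ w.length := by
  obtain ⟨c, hc⟩ := h.cyclePos_add_length
  have := cyclePos_lt hm i; have := cyclePos_lt hm j
  by_cases hij : i = j
  · simp [cycleDist, hij]
  have hw : w ≠ [] := by rintro rfl; cases h; exact hij rfl
  have := List.length_pos_iff.mpr hw
  simp only [cycleDist, if_neg hij]
  rcases c with _ | c
  · split_ifs <;> omega
  · have := Nat.le_mul_of_pos_right (m - 1) (show 0 < c + 1 by omega)
    split_ifs <;> omega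

theorem exists_arrow_ne_one (v : Fin m) : ∃ g w, Arrow m hm v g w ∧ w.val ≠ 1 := by
  have := v.isLt
  by_cases h2 : v.val = 2
  · rw [show v = ⟨2, by omega⟩ from Fin.ext h2]
    exact ⟨_, _, .alpha 0, by simp⟩
  by_cases h1 : v.val ≤ 1
  · exact ⟨_, _, .delta ⟨v, by omega⟩, by simp; omega⟩
  · exact ⟨_, _, .beta v (by omega), by simp; omega⟩

theorem exists_path_length (i : Fin m) (n : ℕ) :
    ∃ w j, IsPath m hm i w j ∧ w.length = n ∧ (0 < n → j.val ≠ 1) := by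
  induction n with
  | zero => exact ⟨[], i, .nil i, rfl, by simp⟩
  | succ n ih =>
    obtain ⟨w, j, hw, hlen, -⟩ := ih
    obtain ⟨g, l, hg, hl⟩ := exists_arrow_ne_one (hm := hm) j
    exact ⟨w ++ [g], l, hw.append (.cons hg (.nil l)), by simp [hlen], fun _ => hl⟩

theorem exists_path_length_cycleDist_of_ne_one (i j : Fin m) (hj : j.val ≠ 1) :
    ∃ w, IsPath m hm i w j ∧ w.length = cycleDist m i j := by
  by_cases hij : i = j
  · exact ⟨[], hij ▸ .nil i, by simp [cycleDist, hij]⟩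
  obtain ⟨w, j', hw, hlen, hj'⟩ := exists_path_length (hm := hm) i (cycleDist m i j)
  obtain ⟨c, hc⟩ := hw.cyclePos_add_length
  obtain ⟨c', -, hc'⟩ := cyclePos_add_cycleDist hm i j
  have hpos : cyclePos m j' = cyclePos m j :=
    Nat.eq_of_add_mul_eq_add_mul (c := c) (c' := c') (cyclePos_lt hm j') (cyclePos_lt hm j)
      (by omega)
  have hD : 0 < cycleDist m i j := by
    have := cyclePos_lt hm i; have := cyclePos_lt hm j
    simp only [cycleDist, if_neg hij]; split_ifs <;> omega
  exact ⟨w, eq_of_cyclePos_eq (hj' hD) hj hpos ▸ hw, hlen⟩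

theorem exists_path_length_cycleDist (i j : Fin m) :
    ∃ w, IsPath m hm i w j ∧ w.length = cycleDist m i j := by
  by_cases hj : j.val ≠ 1
  · exact exists_path_length_cycleDist_of_ne_one i j hj
  by_cases hij : i = j
  · exact ⟨[], hij ▸ .nil i, by simp [cycleDist, hij]⟩
  rw [show j = ⟨1, by omega⟩ from Fin.ext (not_not.mp hj)] at hij ⊢
  obtain ⟨w, hw, hlen⟩ := exists_path_length_cycleDist_of_ne_one (hm := hm) i ⟨2, by omega⟩
    (by simp)
  refine ⟨w ++ [.α 1], hw.append (.cons (.alpha 1) (.nil _)), ?_⟩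
  have := i.isLt
  have : i.val ≠ 1 := fun h => hij (Fin.ext h)
  rw [List.length_append, hlen, List.length_singleton]
  unfold cycleDist cyclePos
  simp only [Fin.ext_iff]
  split_ifs <;> omega

end Paths

section Algebra

variable (k : Type*) [Field k] (m : ℕ) (hm : 4 ≤ m)

noncomputable def ofGen (g : LamGen m) : Lam k m hm := π k m hm (FreeAlgebra.ι k g)

noncomputable def pathL (i : Fin m) (w : List (LamGen m)) : Lam k m hm :=
  eL k m hm i * (w.map (ofGen k m hm)).prod

variable {k m hm}

theorem π_eq_of_rel {x y : FreeAlgebra k (LamGen m)} (h : Rel k m hm x y) :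
    π k m hm x = π k m hm y := RingQuot.mkAlgHom_rel k h

theorem eL_mul_eL (i j : Fin m) :
    eL k m hm i * eL k m hm j = if i = j then eL k m hm i else 0 := by
  simpa [eL, apply_ite] using π_eq_of_rel (Rel.idem (k := k) (hm := hm) i j)

theorem sum_eL : ∑ i, eL k m hm i = 1 := by
  simpa [eL] using π_eq_of_rel (Rel.sum_one (k := k) (hm := hm))

theorem completeOrthogonalIdempotents_eL : CompleteOrthogonalIdempotents (eL k m hm) :=
  ⟨OrthogonalIdempotents.iff_mul_eq.mpr eL_mul_eL, sum_eL⟩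

theorem Arrow.eL_mul_ofGen {i j : Fin m} {g : LamGen m} (h : Arrow m hm i g j) :
    eL k m hm i * ofGen k m hm g = ofGen k m hm g := by
  cases h with
  | alpha t => simpa [eL, ofGen] using π_eq_of_rel (Rel.alpha_src (k := k) (hm := hm) t)
  | delta t => simpa [eL, ofGen] using π_eq_of_rel (Rel.delta_src (k := k) (hm := hm) t)
  | beta _ hj => simpa [eL, ofGen] using π_eq_of_rel (Rel.beta_src (k := k) (hm := hm) _ hj)

theorem Arrow.ofGen_mul_eL {i j : Fin m} {g : LamGen m} (h : Arrow m hm i g j) :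
    ofGen k m hm g * eL k m hm j = ofGen k m hm g := by
  cases h with
  | alpha t => simpa [eL, ofGen] using π_eq_of_rel (Rel.alpha_tgt (k := k) (hm := hm) t)
  | delta t => simpa [eL, ofGen] using π_eq_of_rel (Rel.delta_tgt (k := k) (hm := hm) t)
  | beta _ hj => simpa [eL, ofGen] using π_eq_of_rel (Rel.beta_tgt (k := k) (hm := hm) _ hj)

theorem pathL_nil (i : Fin m) : pathL k m hm i [] = eL k m hm i := by
  simp [pathL]

theorem pathL_cons {i j : Fin m} {g : LamGen m} (h : Arrow m hm i g j) (w : List (LamGen m)) :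
    pathL k m hm i (g :: w) = ofGen k m hm g * pathL k m hm j w := by
  simp only [pathL, List.map_cons, List.prod_cons, ← mul_assoc, h.eL_mul_ofGen, h.ofGen_mul_eL]

theorem IsPath.pathL_mul_eL {i j : Fin m} {w : List (LamGen m)} (h : IsPath m hm i w j) :
    pathL k m hm i w * eL k m hm j = pathL k m hm i w := by
  induction h with
  | nil i => rw [pathL_nil, eL_mul_eL, if_pos rfl]
  | cons ha _ ih => rw [pathL_cons ha, mul_assoc, ih]

theorem eL_mul_pathL (i' i : Fin m) (w : List (LamGen m)) :
    eL k m hm i' * pathL k m hm i w = if i' = i then pathL k m hm i w else 0 := by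
  rw [pathL, ← mul_assoc, eL_mul_eL]
  split_ifs with h <;> simp [h]

theorem IsPath.pathL_mul_pathL {i j j' : Fin m} {w w' : List (LamGen m)}
    (h : IsPath m hm i w j) :
    pathL k m hm i w * pathL k m hm j' w' = if j = j' then pathL k m hm i (w ++ w') else 0 := by
  rw [← h.pathL_mul_eL, mul_assoc, eL_mul_pathL]
  split_ifs with hj
  · rw [show pathL k m hm j' w' = eL k m hm j' * _ from rfl, ← mul_assoc, ← hj, h.pathL_mul_eL]
    simp [pathL, mul_assoc]
  · rw [mul_zero]

theorem prod_ofGen_eq_zero_of_length_eq {l : List (LamGen m)} (hlen : l.length = m)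
    (harr : ∀ g ∈ l, IsArrow g) : (l.map (ofGen k m hm)).prod = 0 := by
  obtain ⟨w, rfl⟩ : ∃ w : Fin m → LamGen m, l = List.ofFn w :=
    ⟨fun n => l[n.val], List.ext_getElem (by simp [hlen]) (by simp)⟩
  simpa [ofGen, List.map_ofFn, map_list_prod, Function.comp_def] using
    π_eq_of_rel (Rel.long (k := k) (hm := hm) w (by simpa using harr))

theorem IsPath.pathL_eq_zero {i j : Fin m} {w : List (LamGen m)} (h : IsPath m hm i w j)
    (hw : m ≤ w.length) : pathL k m hm i w = 0 := by
  rw [pathL, ← List.take_append_drop m w, List.map_append, List.prod_append,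
    prod_ofGen_eq_zero_of_length_eq (by simpa using hw)
      (fun g hg => h.isArrow g (List.mem_of_mem_take hg)), zero_mul, mul_zero]

variable (k m hm) in
def pathsBetween (i j : Fin m) : Set (Lam k m hm) :=
  {x | ∃ w, IsPath m hm i w j ∧ x = pathL k m hm i w}

variable (k m hm) in
def paths : Set (Lam k m hm) := ⋃ i, ⋃ j, pathsBetween k m hm i j

theorem IsPath.pathL_mem_paths {i j : Fin m} {w : List (LamGen m)} (h : IsPath m hm i w j) :
    pathL k m hm i w ∈ paths k m hm :=
  Set.mem_iUnion₂.mpr ⟨i, j, w, h, rfl⟩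

theorem Arrow.pathL_singleton {i j : Fin m} {g : LamGen m} (h : Arrow m hm i g j) :
    pathL k m hm i [g] = ofGen k m hm g := by
  rw [pathL_cons h, pathL_nil, h.ofGen_mul_eL]

theorem adjoin_range_ofGen : Algebra.adjoin k (Set.range (ofGen k m hm)) = ⊤ := by
  rw [show Set.range (ofGen k m hm) = π k m hm '' Set.range (FreeAlgebra.ι k) from
      Set.range_comp _ _, Algebra.adjoin_image, FreeAlgebra.adjoin_range_ι,
    Algebra.map_top, AlgHom.range_eq_top]
  exact RingQuot.mkAlgHom_surjective k _

theorem span_paths_mul_le :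
    Submodule.span k (paths k m hm) * Submodule.span k (paths k m hm) ≤
      Submodule.span k (paths k m hm) := by
  rw [Submodule.span_mul_span, Submodule.span_le]
  rintro _ ⟨_, hx, _, hy, rfl⟩
  obtain ⟨i, j, w, hw, rfl⟩ := Set.mem_iUnion₂.mp hx
  obtain ⟨i', j', w', hw', rfl⟩ := Set.mem_iUnion₂.mp hy
  dsimp only
  rw [hw.pathL_mul_pathL]
  split_ifs with h
  · exact Submodule.subset_span (hw.append (h ▸ hw')).pathL_mem_paths
  · exact zero_mem _

theorem Arrow.ofGen_mem_paths {i j : Fin m} {g : LamGen m} (h : Arrow m hm i g j) :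
    ofGen k m hm g ∈ paths k m hm :=
  h.pathL_singleton (k := k) ▸ (IsPath.cons h (.nil j)).pathL_mem_paths

theorem eL_mem_paths (i : Fin m) : eL k m hm i ∈ paths k m hm :=
  pathL_nil (k := k) (hm := hm) i ▸ (IsPath.nil i).pathL_mem_paths

theorem ofGen_mem_span_paths (g : LamGen m) :
    ofGen k m hm g ∈ Submodule.span k (paths k m hm) := by
  cases g with
  | e i => exact Submodule.subset_span (eL_mem_paths i)
  | α t => exact Submodule.subset_span (Arrow.alpha t).ofGen_mem_paths
  | δ t => exact Submodule.subset_span (Arrow.delta t).ofGen_mem_paths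
  | β b =>
    by_cases hb : 3 ≤ b.val
    · exact Submodule.subset_span (Arrow.beta b hb).ofGen_mem_paths
    · rw [ofGen, π_eq_of_rel (Rel.beta_junk b (by omega)), map_zero]
      exact zero_mem _

theorem span_paths_eq_top : Submodule.span k (paths k m hm) = ⊤ := by
  let S : Subalgebra k (Lam k m hm) := (Submodule.span k (paths k m hm)).toSubalgebra
    (sum_eL (k := k) (hm := hm) ▸
      sum_mem fun i _ => Submodule.subset_span (eL_mem_paths (k := k) i))
    (fun {_ _} hx hy => span_paths_mul_le (Submodule.mul_mem_mul hx hy))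
  have : ⊤ ≤ S := by
    rw [← adjoin_range_ofGen, Algebra.adjoin_le_iff]
    rintro _ ⟨g, rfl⟩
    exact ofGen_mem_span_paths g
  exact eq_top_iff.mpr fun x _ => this trivial

theorem eL_mul_mul_eL_mem_span (i j : Fin m) (x : Lam k m hm) :
    eL k m hm i * x * eL k m hm j ∈ Submodule.span k (pathsBetween k m hm i j) := by
  let L := (LinearMap.mulRight k (eL k m hm j)).comp (LinearMap.mulLeft k (eL k m hm i))
  have hx : x ∈ Submodule.span k (paths k m hm) := by simp [span_paths_eq_top]
  refine Submodule.span_le.mpr ?_ (Submodule.apply_mem_span_image_of_mem_span L hx)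
  rintro _ ⟨_, hp, rfl⟩
  obtain ⟨i', j', w, hw, rfl⟩ := Set.mem_iUnion₂.mp hp
  simp only [L, LinearMap.comp_apply, LinearMap.mulLeft_apply, LinearMap.mulRight_apply,
    eL_mul_pathL]
  split_ifs with hi
  · subst hi
    rw [← hw.pathL_mul_eL, mul_assoc, eL_mul_eL]
    split_ifs with hj
    · subst hj
      rw [hw.pathL_mul_eL]
      exact Submodule.subset_span ⟨w, hw, rfl⟩
    · rw [mul_zero]; exact zero_mem _
  · rw [zero_mul]; exact zero_mem _

theorem eL_mul_mul_eL_mul_mul_eL_eq_zero {i j l : Fin m}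
    (hD : m ≤ cycleDist m i j + cycleDist m j l) (x y : Lam k m hm) :
    eL k m hm i * x * eL k m hm j * y * eL k m hm l = 0 := by
  have hprod : eL k m hm i * x * eL k m hm j * y * eL k m hm l =
      (eL k m hm i * x * eL k m hm j) * (eL k m hm j * y * eL k m hm l) := by
    have he : eL k m hm j * eL k m hm j = eL k m hm j := by rw [eL_mul_eL, if_pos rfl]
    simp only [mul_assoc]
    rw [← mul_assoc (eL k m hm j) (eL k m hm j), he]
  have hmem := Submodule.mul_mem_mul (eL_mul_mul_eL_mem_span i j x) (eL_mul_mul_eL_mem_span j l y)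
  rw [Submodule.span_mul_span, Submodule.span_eq_bot.mpr ?_] at hmem
  · rwa [hprod, ← Submodule.mem_bot k]
  rintro _ ⟨_, ⟨w, hw, rfl⟩, _, ⟨w', hw', rfl⟩, rfl⟩
  dsimp only
  rw [hw.pathL_mul_pathL, if_pos rfl]
  refine (hw.append hw').pathL_eq_zero ?_
  have := hw.cycleDist_le_length; have := hw'.cycleDist_le_length
  rw [List.length_append]; omega

end Algebra

section Representation

variable (k : Type*) [Field k] (m : ℕ) (hm : 4 ≤ m)

/-- A representation of `Λ_m` with basis indexed by (level, vertex): an arrow `i → j` sends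
the basis vector at `(t, j)` to the one at `(t + 1, i)`, so every path of length `< m` acts
nontrivially while products of `m` arrows vanish. -/
abbrev RepSpace := Fin m × Fin m → k

def vertexProj (v : Fin m) : Module.End k (RepSpace k m) where
  toFun φ p := if p.2 = v then φ p else 0
  map_add' φ ψ := by ext p; split_ifs <;> simp [*]
  map_smul' c φ := by ext p; split_ifs <;> simp [*]

def arrowShift (i j : Fin m) : Module.End k (RepSpace k m) where
  toFun φ p := if h : p.2 = i ∧ 0 < p.1.val then φ (⟨p.1 - 1, by omega⟩, j) else 0
  map_add' φ ψ := by ext p; split_ifs <;> simp [*]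
  map_smul' c φ := by ext p; split_ifs <;> simp [*]

def repGen : LamGen m → Module.End k (RepSpace k m)
  | .e v => vertexProj k m v
  | .α t => arrowShift k m ⟨2, by omega⟩ ⟨t, by omega⟩
  | .δ t => arrowShift k m ⟨t, by omega⟩ ⟨m - 1, by omega⟩
  | .β j => if 3 ≤ j.val then arrowShift k m j ⟨j - 1, by omega⟩ else 0

variable {k m hm}

@[simp]
theorem vertexProj_apply (v : Fin m) (φ : RepSpace k m) (p : Fin m × Fin m) :
    vertexProj k m v φ p = if p.2 = v then φ p else 0 := rfl

@[simp]
theorem arrowShift_apply (i j : Fin m) (φ : RepSpace k m) (p : Fin m × Fin m) :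
    arrowShift k m i j φ p =
      if h : p.2 = i ∧ 0 < p.1.val then φ (⟨p.1 - 1, by omega⟩, j) else 0 := rfl

theorem vertexProj_mul_vertexProj (i j : Fin m) :
    vertexProj k m i * vertexProj k m j = if i = j then vertexProj k m i else 0 := by
  refine LinearMap.ext fun φ => funext fun p => ?_
  by_cases hi : p.2 = i <;> by_cases hj : p.2 = j <;> split_ifs <;> simp_all

theorem sum_vertexProj : ∑ i, vertexProj k m i = 1 := by
  refine LinearMap.ext fun φ => funext fun p => ?_
  simp [Finset.sum_apply]

theorem vertexProj_mul_arrowShift (i j : Fin m) :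
    vertexProj k m i * arrowShift k m i j = arrowShift k m i j := by
  refine LinearMap.ext fun φ => funext fun p => ?_
  by_cases hi : p.2 = i <;> simp [hi]

theorem arrowShift_mul_vertexProj (i j : Fin m) :
    arrowShift k m i j * vertexProj k m j = arrowShift k m i j := by
  refine LinearMap.ext fun φ => funext fun p => ?_
  simp

theorem arrowShift_mul_arrowShift (i j j' l : Fin m) :
    arrowShift k m i j * arrowShift k m j l = arrowShift k m i j' * arrowShift k m j' l := by
  refine LinearMap.ext fun φ => funext fun p => ?_
  simp

def VanishesBelow (n : ℕ) (φ : RepSpace k m) : Prop :=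
  ∀ p : Fin m × Fin m, p.1.val < n → φ p = 0

theorem VanishesBelow.repGen {n : ℕ} {φ : RepSpace k m} (hφ : VanishesBelow n φ)
    {g : LamGen m} (hg : IsArrow g) : VanishesBelow (n + 1) (repGen k m hm g φ) := by
  have key (i j : Fin m) : VanishesBelow (n + 1) (arrowShift k m i j φ) := by
    intro p hp
    simp only [arrowShift_apply]
    split_ifs
    · exact hφ _ (by simp; omega)
    · rfl
  cases g with
  | e => exact hg.elim
  | α t => exact key _ _
  | δ t => exact key _ _
  | β j =>
    simp only [LamGen.repGen]
    split_ifs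
    exacts [key _ _, fun _ _ => rfl]

theorem vanishesBelow_prod_repGen (l : List (LamGen m)) (hl : ∀ g ∈ l, IsArrow g)
    (φ : RepSpace k m) : VanishesBelow l.length ((l.map (repGen k m hm)).prod φ) := by
  induction l with
  | nil => intro p hp; simp at hp
  | cons g l ih =>
    simp only [List.forall_mem_cons] at hl
    simpa using (ih hl.2).repGen hl.1

theorem repGen_rel ⦃x y : FreeAlgebra k (LamGen m)⦄ (h : Rel k m hm x y) :
    FreeAlgebra.lift k (repGen k m hm) x = FreeAlgebra.lift k (repGen k m hm) y := by
  cases h with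
  | idem i j => simpa [repGen, apply_ite] using vertexProj_mul_vertexProj i j
  | sum_one => simpa [repGen] using sum_vertexProj
  | alpha_src t => simpa [repGen] using vertexProj_mul_arrowShift _ _
  | alpha_tgt t => simpa [repGen] using arrowShift_mul_vertexProj _ _
  | delta_src t => simpa [repGen] using vertexProj_mul_arrowShift _ _
  | delta_tgt t => simpa [repGen] using arrowShift_mul_vertexProj _ _
  | beta_junk j hj => simp [repGen, show ¬ 3 ≤ j.val by omega]
  | beta_src j hj => simpa [repGen, hj] using vertexProj_mul_arrowShift _ _
  | beta_tgt j hj => simpa [repGen, hj] using arrowShift_mul_vertexProj _ _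
  | comm => simpa [repGen] using arrowShift_mul_arrowShift _ _ _ _
  | long w hw =>
    refine LinearMap.ext fun φ => funext fun p => ?_
    simpa [map_list_prod, List.map_ofFn, Function.comp_def] using
      vanishesBelow_prod_repGen (hm := hm) (List.ofFn w) (by simpa using hw) φ p (by simp)

variable (k m hm) in
noncomputable def rep : Lam k m hm →ₐ[k] Module.End k (RepSpace k m) :=
  RingQuot.liftAlgHom k ⟨FreeAlgebra.lift k (repGen k m hm), repGen_rel⟩

theorem rep_ofGen (g : LamGen m) : rep k m hm (ofGen k m hm g) = repGen k m hm g := by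
  simp [rep, ofGen, π]

theorem arrowShift_single (i j t : Fin m) (ht : t.val + 1 < m) :
    arrowShift k m i j (Pi.single (t, j) 1) = Pi.single (⟨t + 1, ht⟩, i) 1 := by
  funext p
  simp only [arrowShift_apply, Pi.single_apply, Prod.ext_iff, Fin.ext_iff]
  split_ifs <;> simp_all
  omega

theorem Arrow.repGen_eq {i j : Fin m} {g : LamGen m} (h : Arrow m hm i g j) :
    repGen k m hm g = arrowShift k m i j := by
  cases h <;> simp [repGen, *]

theorem rep_eL (i : Fin m) : rep k m hm (eL k m hm i) = vertexProj k m i :=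
  rep_ofGen (e i)

theorem IsPath.rep_prod_single {i j : Fin m} {w : List (LamGen m)} (h : IsPath m hm i w j)
    (hw : w.length < m) :
    rep k m hm (w.map (ofGen k m hm)).prod (Pi.single (⟨0, by omega⟩, j) 1) =
      Pi.single (⟨w.length, hw⟩, i) 1 := by
  induction h with
  | nil i => simp
  | cons ha hp ih =>
    simp only [List.length_cons] at hw
    simp only [List.map_cons, List.prod_cons, map_mul, Module.End.mul_apply, ih (by omega),
      rep_ofGen, ha.repGen_eq]
    exact arrowShift_single _ _ _ hw

theorem IsPath.pathL_ne_zero {i j : Fin m} {w : List (LamGen m)} (h : IsPath m hm i w j)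
    (hw : w.length < m) : pathL k m hm i w ≠ 0 := by
  intro h0
  have := congrArg
    (fun x => rep k m hm x (Pi.single (⟨0, by omega⟩, j) 1) (⟨w.length, hw⟩, i)) h0
  simp [pathL, h.rep_prod_single hw, rep_eL] at this

theorem linearIndependent_eL : LinearIndependent k (eL k m hm) := by
  refine Fintype.linearIndependent_iff.mpr fun c hc j => ?_
  have := congrArg
    (fun x => rep k m hm x (Pi.single (⟨0, by omega⟩, j) 1) (⟨0, by omega⟩, j)) hc
  simpa [rep_eL, Finset.sum_apply, Pi.single_apply] using this

end Representation

section Invariant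

variable {k : Type*} [Field k] {m : ℕ} {hm : 4 ≤ m}

theorem tripleVanishes_eL_iff (i j l : Fin m) :
    TripleVanishes (eL k m hm i) (eL k m hm j) (eL k m hm l) ↔
      m ≤ cycleDist m i j + cycleDist m j l := by
  refine ⟨fun h => ?_, fun hD x y => eL_mul_mul_eL_mul_mul_eL_eq_zero hD x y⟩
  by_contra! hD
  obtain ⟨w, hw, hlen⟩ := exists_path_length_cycleDist (hm := hm) i j
  obtain ⟨w', hw', hlen'⟩ := exists_path_length_cycleDist (hm := hm) j l
  refine (hw.append hw').pathL_ne_zero (k := k) (by simp [hlen, hlen']; omega) ?_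
  simpa [eL_mul_pathL, hw.pathL_mul_eL, hw.pathL_mul_pathL, (hw.append hw').pathL_mul_eL]
    using h (pathL k m hm i w) (pathL k m hm j w')

end Invariant

end LamGen

/-- Every automorphism of `Λ_m` preserving the linear span `S` of
the primitive idempotents `e₁,…,e_m` either fixes all the idempotents, or
interchanges `e₁` and `e₂` (indices `0` and `1` here) while fixing `e₃,…,e_m`. -/
theorem stmt_4 (k : Type*) [Field k] (m : ℕ) (hm : 4 ≤ m)
    (f : Lam k m hm ≃ₐ[k] Lam k m hm)
    (hf : ∀ i : Fin m, f (eL k m hm i) ∈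
      Submodule.span k (Set.range (eL k m hm))) :
    (∀ i : Fin m, f (eL k m hm i) = eL k m hm i) ∨
    (f (eL k m hm ⟨0, by omega⟩) = eL k m hm ⟨1, by omega⟩ ∧
     f (eL k m hm ⟨1, by omega⟩) = eL k m hm ⟨0, by omega⟩ ∧
     ∀ i : Fin m, 2 ≤ i.val → f (eL k m hm i) = eL k m hm i) := by
  obtain ⟨σ, hσ⟩ := completeOrthogonalIdempotents_eL.exists_perm_of_mem_span
    linearIndependent_eL (completeOrthogonalIdempotents_eL.map f.toRingHom)
    (fun i => (map_ne_zero_iff f f.injective).mpr (linearIndependent_eL.ne_zero i)) hf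
  have hdist (i j l : Fin m) :
      m ≤ cycleDist m (σ i) (σ j) + cycleDist m (σ j) (σ l) ↔
        m ≤ cycleDist m i j + cycleDist m j l := by
    rw [← tripleVanishes_eL_iff (k := k) (hm := hm), ← tripleVanishes_eL_iff (k := k),
      ← hσ, ← hσ, ← hσ]
    exact TripleVanishes.map_iff f.toRingEquiv _ _ _
  rcases PreservesLongTriples.eq_one_or_swap hm hdist with rfl | rfl
  · exact .inl hσ
  · refine .inr ⟨hσ _, hσ _, fun i hi => (hσ i).trans ?_⟩
    rw [Equiv.swap_apply_of_ne_of_ne] <;> rintro rfl <;> simp at hi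
end
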